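/- Let P_j denote the Legendre polynomials. There exists a constant K > 0, independent of j and y, such that for all j ≥ 1 and all y ∈ (−1,1), |P_j(y)| < K / (√(j+1) · (1−y²)^{1/4}). -/

import Mathlib

/-!
Sonin's argument. With `t = cos θ`, the function `u(θ) = sin^{1/2} θ · P_n(cos θ)` solves
`u'' + φ u = 0` with `φ(θ) = (n + 1/2)² + 1/(4 sin² θ)`, and `(u² + u'²/φ)' = -φ' u'²/φ²`;
so Sonin's function `u² + u'²/φ` is largest at `θ = π/2`, where `φ` is smallest.
In the variable `t` one has `2 sin^{1/2} θ · u' = (soninA P_n).eval t` and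
`4 sin² θ · φ = (4n(n+1) + 1)(1 - t²) + 1`, so Sonin's function is
`√(1 - t²) · soninQ P_n (n(n+1)) t`; comparing squares avoids differentiating the square root.
At `t = 0` only `P_n(0)` and `P_n'(0)` enter; they are `±C(2m, m)/4^m` up to the factor
`2m + 1`, and `(m + 1) · C(2m, m)² ≤ 16^m` bounds Sonin's function by `4/(n + 1)`,
whence `(1 - y²) P_n(y)⁴ ≤ 16/(n + 1)²`.
-/

open Polynomial

/-- The `n`-th Legendre polynomial, via the Rodrigues formula. -/
noncomputable def legendre (n : ℕ) : Polynomial ℝ :=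
  Polynomial.C (1 / (2 ^ n * (n.factorial : ℝ))) *
    (Polynomial.derivative^[n] ((Polynomial.X ^ 2 - 1) ^ n))

open Set

lemma isMaxOn_of_sub_mul_deriv_nonpos {f f' : ℝ → ℝ} {s : Set ℝ} {a : ℝ} (hs : s.OrdConnected)
    (ha : a ∈ s) (hf : ∀ t ∈ s, HasDerivAt f (f' t) t) (hsign : ∀ t ∈ s, (t - a) * f' t ≤ 0) :
    IsMaxOn f s a := by
  have hcont : ∀ {b c}, b ∈ s → c ∈ s → ContinuousOn f (Icc b c) := fun hb hc t ht =>
    (hf t (hs.out hb hc ht)).continuousAt.continuousWithinAt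
  have hderiv : ∀ {b c}, b ∈ s → c ∈ s → ∀ t ∈ interior (Icc b c),
      HasDerivWithinAt f (f' t) (interior (Icc b c)) t := fun hb hc t ht =>
    (hf t (hs.out hb hc (interior_subset ht))).hasDerivWithinAt
  intro y hy
  rcases le_total y a with hya | hay
  · refine monotoneOn_of_hasDerivWithinAt_nonneg (convex_Icc y a) (hcont hy ha) (hderiv hy ha)
      (fun t ht => ?_) ⟨le_rfl, hya⟩ ⟨hya, le_rfl⟩ hya
    rw [interior_Icc] at ht
    exact nonneg_of_mul_nonpos_right (hsign t (hs.out hy ha (Ioo_subset_Icc_self ht)))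
      (sub_neg.2 ht.2)
  · refine antitoneOn_of_hasDerivWithinAt_nonpos (convex_Icc a y) (hcont ha hy) (hderiv ha hy)
      (fun t ht => ?_) ⟨le_rfl, hay⟩ ⟨hay, le_rfl⟩ hay
    rw [interior_Icc] at ht
    exact nonpos_of_mul_nonpos_right (hsign t (hs.out ha hy (Ioo_subset_Icc_self ht)))
      (sub_pos.2 ht.1)

section Sonin

variable (P : ℝ[X]) (lam : ℝ)

noncomputable def soninA : ℝ[X] := X * P - 2 * (1 - X ^ 2) * derivative P

noncomputable def soninQ (t : ℝ) : ℝ :=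
  P.eval t ^ 2 + (soninA P).eval t ^ 2 / ((4 * lam + 1) * (1 - t ^ 2) + 1)

variable {P lam}

lemma soninQ_zero :
    soninQ P lam 0 = P.eval 0 ^ 2 + 2 * (derivative P).eval 0 ^ 2 / (2 * lam + 1) := by
  simp only [soninQ, soninA, eval_sub, eval_mul, eval_X, eval_pow, eval_one, eval_ofNat]
  rw [show (4 * lam + 1) * (1 - 0 ^ 2) + 1 = 2 * (2 * lam + 1) by ring, ← div_div]
  ring

lemma sonin_denom_pos (hlam : 0 ≤ lam) {t : ℝ} (ht : t ∈ Icc (-1) 1) :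
    0 < (4 * lam + 1) * (1 - t ^ 2) + 1 := by
  have : 0 ≤ 1 - t ^ 2 := by nlinarith [ht.1, ht.2]
  positivity

lemma sq_eval_le_soninQ (hlam : 0 ≤ lam) {t : ℝ} (ht : t ∈ Icc (-1) 1) :
    P.eval t ^ 2 ≤ soninQ P lam t :=
  le_add_of_nonneg_right (div_nonneg (sq_nonneg _) (sonin_denom_pos hlam ht).le)

lemma derivative_soninA
    (hP : (1 - X ^ 2) * derivative (derivative P) - 2 * X * derivative P + C lam * P = 0) :
    derivative (soninA P) = C (2 * lam + 1) * P + X * derivative P := by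
  simp only [soninA, derivative_mul, derivative_sub, derivative_X, derivative_one,
    derivative_X_pow, derivative_ofNat, Nat.cast_ofNat, map_add, map_mul, map_ofNat, map_one]
  linear_combination -2 * hP

lemma hasDerivAt_one_sub_sq_mul_soninQ_sq
    (hP : (1 - X ^ 2) * derivative (derivative P) - 2 * X * derivative P + C lam * P = 0)
    {t : ℝ} (hD : (4 * lam + 1) * (1 - t ^ 2) + 1 ≠ 0) :
    HasDerivAt (fun s => (1 - s ^ 2) * soninQ P lam s ^ 2)
      (-4 * t * soninQ P lam t * (soninA P).eval t ^ 2 /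
        ((4 * lam + 1) * (1 - t ^ 2) + 1) ^ 2) t := by
  have hw : HasDerivAt (fun s : ℝ => 1 - s ^ 2) (-(2 * t)) t := by
    simpa using (hasDerivAt_pow 2 t).const_sub 1
  have hA := (soninA P).hasDerivAt t
  rw [derivative_soninA hP] at hA
  have hQ : HasDerivAt (soninQ P lam) _ t :=
    ((P.hasDerivAt t).pow 2).add ((hA.pow 2).div ((hw.const_mul (4 * lam + 1)).add_const 1) hD)
  refine (hw.mul (hQ.pow 2)).congr_deriv ?_
  have ha : (soninA P).eval t = t * P.eval t - 2 * (1 - t ^ 2) * (derivative P).eval t := by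
    simp [soninA]
  simp only [soninQ, Pi.pow_apply, ha, eval_add, eval_mul, eval_C, eval_X, Nat.cast_ofNat,
    Nat.add_one_sub_one, pow_one]
  generalize hDdef : (4 * lam + 1) * (1 - t ^ 2) + 1 = D at hD ⊢
  field_simp
  subst hDdef
  ring

theorem one_sub_sq_mul_soninQ_sq_le
    (hP : (1 - X ^ 2) * derivative (derivative P) - 2 * X * derivative P + C lam * P = 0)
    (hlam : 0 ≤ lam) {y : ℝ} (hy : y ∈ Icc (-1) 1) :
    (1 - y ^ 2) * soninQ P lam y ^ 2 ≤ soninQ P lam 0 ^ 2 := by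
  have hmax := isMaxOn_of_sub_mul_deriv_nonpos (a := 0) ordConnected_Icc (by norm_num)
    (fun t ht => hasDerivAt_one_sub_sq_mul_soninQ_sq hP (sonin_denom_pos hlam ht).ne')
    (fun t ht => ?_)
  · simpa using hmax hy
  have hQ : 0 ≤ soninQ P lam t := (sq_nonneg _).trans (sq_eval_le_soninQ hlam ht)
  rw [show ∀ a b c : ℝ, (t - 0) * (-4 * t * a * b / c) = -(4 * t ^ 2 * a * b / c) by
    intros; ring]
  exact neg_nonpos.2 (by positivity)

end Sonin

theorem legendre_ode (n : ℕ) :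
    (1 - X ^ 2) * derivative (derivative (legendre n)) - 2 * X * derivative (legendre n)
      + C ((n : ℝ) * (n + 1)) * legendre n = 0 := by
  -- differentiate `(X² - 1) q' = 2n X q` once, then `n` more times by Leibniz' rule
  set q : ℝ[X] := (X ^ 2 - 1) ^ n
  have hq : (X ^ 2 - 1) * derivative q = C (2 * n : ℝ) * (q * X) := by
    rcases n with _ | m
    · simp [q]
    · simp [q, derivative_pow]
      ring
  have hq2 : derivative^[2] q * X ^ 2 - derivative^[2] q + C (2 - 2 * n : ℝ) * (derivative q * X)
      - C (2 * n : ℝ) * q = 0 := by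
    have h := congrArg derivative hq
    simp [derivative_mul, map_ofNat] at h ⊢
    linear_combination h
  have h := congrArg (derivative^[n]) hq2
  rw [iterate_map_sub, iterate_map_add, iterate_map_sub, iterate_derivative_C_mul,
    iterate_derivative_C_mul, iterate_derivative_derivative_mul_X_sq,
    iterate_derivative_derivative_mul_X, iterate_map_zero] at h
  simp only [← Function.iterate_add_apply, nsmul_eq_mul] at h
  have hcast : ((n * (n - 1) : ℕ) : ℝ[X]) = n * (n - 1) := by cases n <;> simp
  rw [hcast] at h
  simp only [Nat.cast_mul, Nat.cast_ofNat, map_sub, map_mul, map_ofNat, map_natCast, map_add,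
    map_one] at h ⊢
  simp only [legendre, derivative_C_mul, ← Function.iterate_succ_apply' derivative]
  linear_combination -C (1 / (2 ^ n * (n.factorial : ℝ))) * h

section Coeff

variable {R : Type*} [CommRing R]

lemma X_sq_sub_one_pow_eq_expand (n : ℕ) :
    (X ^ 2 - 1 : R[X]) ^ n = expand R 2 ((X + C (-1)) ^ n) := by
  simp [sub_eq_add_neg]

lemma coeff_X_sq_sub_one_pow_two_mul (n j : ℕ) :
    ((X ^ 2 - 1 : R[X]) ^ n).coeff (2 * j) = (-1) ^ (n - j) * n.choose j := by
  rw [X_sq_sub_one_pow_eq_expand, coeff_expand_mul' two_pos, coeff_X_add_C_pow]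

lemma coeff_X_sq_sub_one_pow_two_mul_add_one (n j : ℕ) :
    ((X ^ 2 - 1 : R[X]) ^ n).coeff (2 * j + 1) = 0 := by
  rw [X_sq_sub_one_pow_eq_expand, coeff_expand two_pos, if_neg (by omega)]

end Coeff

lemma coeff_legendre (n k : ℕ) :
    (legendre n).coeff k
      = (k + n).descFactorial n / (2 ^ n * n.factorial)
        * ((X ^ 2 - 1 : ℝ[X]) ^ n).coeff (k + n) := by
  rw [legendre, coeff_C_mul, coeff_iterate_derivative, nsmul_eq_mul]
  ring

lemma legendre_eval_zero_two_mul (m : ℕ) :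
    (legendre (2 * m)).eval 0 = (-1) ^ m * (m.centralBinom / 4 ^ m) := by
  rw [← coeff_zero_eq_eval_zero, coeff_legendre, zero_add, Nat.descFactorial_self,
    coeff_X_sq_sub_one_pow_two_mul, Nat.centralBinom_eq_two_mul_choose,
    show 2 * m - m = m by omega, pow_mul]
  have : ((2 * m).factorial : ℝ) ≠ 0 := by positivity
  field_simp
  norm_num
  ring

lemma legendre_eval_zero_two_mul_add_one (m : ℕ) : (legendre (2 * m + 1)).eval 0 = 0 := by
  rw [← coeff_zero_eq_eval_zero, coeff_legendre, zero_add, coeff_X_sq_sub_one_pow_two_mul_add_one,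
    mul_zero]

lemma derivative_legendre_eval_zero_two_mul (m : ℕ) :
    (derivative (legendre (2 * m))).eval 0 = 0 := by
  rw [← coeff_zero_eq_eval_zero, coeff_derivative, coeff_legendre,
    show 0 + 1 + 2 * m = 2 * m + 1 by ring, coeff_X_sq_sub_one_pow_two_mul_add_one]
  simp

lemma derivative_legendre_eval_zero_two_mul_add_one (m : ℕ) :
    (derivative (legendre (2 * m + 1))).eval 0
      = (-1) ^ m * (2 * m + 1) * (m.centralBinom / 4 ^ m) := by
  rw [← coeff_zero_eq_eval_zero, coeff_derivative, coeff_legendre,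
    show 0 + 1 + (2 * m + 1) = 2 * (m + 1) by ring, coeff_X_sq_sub_one_pow_two_mul,
    show 2 * m + 1 - (m + 1) = m by omega, Nat.centralBinom_eq_two_mul_choose]
  have hchoose : ((2 * m + 1).choose (m + 1) : ℝ) * (m + 1) = (2 * m + 1) * (2 * m).choose m := by
    exact_mod_cast (Nat.add_one_mul_choose_eq (2 * m) m).symm
  have hdesc :
      ((2 * (m + 1)).descFactorial (2 * m + 1) : ℝ) = (2 * m + 2) * (2 * m + 1).factorial := by
    have h := Nat.succ_descFactorial (2 * m + 1) (2 * m + 1)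
    rw [Nat.descFactorial_self, show 2 * m + 1 + 1 - (2 * m + 1) = 1 by omega, one_mul] at h
    rw [show 2 * (m + 1) = 2 * m + 1 + 1 by ring, h]
    push_cast
    ring
  rw [hdesc, pow_succ, pow_mul]
  have : ((2 * m + 1).factorial : ℝ) ≠ 0 := by positivity
  field_simp
  norm_num
  linear_combination (4 ^ m : ℝ) * hchoose

lemma succ_mul_centralBinom_sq_le (m : ℕ) : (m + 1) * m.centralBinom ^ 2 ≤ 16 ^ m := by
  induction m with
  | zero => simp
  | succ m ih =>
    have hrec := Nat.succ_mul_centralBinom_succ m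
    have key : (m + 1) ^ 2 * ((m + 2) * (m + 1).centralBinom ^ 2) ≤ (m + 1) ^ 2 * 16 ^ (m + 1) :=
      calc (m + 1) ^ 2 * ((m + 2) * (m + 1).centralBinom ^ 2)
          = (m + 2) * ((m + 1) * (m + 1).centralBinom) ^ 2 := by ring
        _ = ((m + 2) * (2 * (2 * m + 1)) ^ 2) * m.centralBinom ^ 2 := by rw [hrec]; ring
        _ ≤ (16 * (m + 1) ^ 3) * m.centralBinom ^ 2 := by gcongr ?_ * _; nlinarith
        _ = (16 * (m + 1) ^ 2) * ((m + 1) * m.centralBinom ^ 2) := by ring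
        _ ≤ (16 * (m + 1) ^ 2) * 16 ^ m := by gcongr
        _ = (m + 1) ^ 2 * 16 ^ (m + 1) := by ring
    exact Nat.le_of_mul_le_mul_left key (by positivity)

lemma centralBinom_div_four_pow_sq_le (m : ℕ) :
    ((m.centralBinom : ℝ) / 4 ^ m) ^ 2 ≤ 1 / (m + 1) := by
  have h : ((m : ℝ) + 1) * m.centralBinom ^ 2 ≤ 16 ^ m := by
    exact_mod_cast succ_mul_centralBinom_sq_le m
  rw [div_pow, ← pow_mul, mul_comm, pow_mul, div_le_div_iff₀ (by positivity) (by positivity)]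
  norm_num
  linarith

lemma soninQ_legendre_zero_le (n : ℕ) : soninQ (legendre n) (n * (n + 1)) 0 ≤ 4 / (n + 1) := by
  obtain ⟨m, hn⟩ := Nat.even_or_odd' n
  have hc := (le_div_iff₀ (by positivity)).1 (centralBinom_div_four_pow_sq_le m)
  have hsign : ((-1 : ℝ) ^ m) ^ 2 = 1 := by rw [← pow_mul, pow_mul']; simp
  rcases hn with rfl | rfl
  · rw [soninQ_zero, legendre_eval_zero_two_mul, derivative_legendre_eval_zero_two_mul, mul_pow,
      hsign]
    generalize (m.centralBinom : ℝ) / 4 ^ m = c at hc ⊢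
    push_cast
    rw [zero_pow two_ne_zero, mul_zero, zero_div, add_zero, one_mul,
      le_div_iff₀ (by positivity)]
    nlinarith
  · rw [soninQ_zero, legendre_eval_zero_two_mul_add_one,
      derivative_legendre_eval_zero_two_mul_add_one, mul_pow, mul_pow, hsign]
    generalize (m.centralBinom : ℝ) / 4 ^ m = c at hc ⊢
    push_cast
    rw [zero_pow two_ne_zero, zero_add, one_mul, div_le_div_iff₀ (by positivity) (by positivity)]
    nlinarith [mul_le_mul_of_nonneg_left hc (sq_nonneg (2 * (m : ℝ) + 1))]

theorem one_sub_sq_mul_legendre_eval_pow_four_le (n : ℕ) {y : ℝ} (hy : y ∈ Icc (-1) 1) :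
    (1 - y ^ 2) * (legendre n).eval y ^ 4 ≤ (4 / (n + 1)) ^ 2 := by
  have hlam : (0 : ℝ) ≤ n * (n + 1) := by positivity
  have hw : 0 ≤ 1 - y ^ 2 := by nlinarith [hy.1, hy.2]
  calc (1 - y ^ 2) * (legendre n).eval y ^ 4
      = (1 - y ^ 2) * ((legendre n).eval y ^ 2) ^ 2 := by ring
    _ ≤ (1 - y ^ 2) * soninQ (legendre n) (n * (n + 1)) y ^ 2 := by
      gcongr
      exact sq_eval_le_soninQ hlam hy
    _ ≤ soninQ (legendre n) (n * (n + 1)) 0 ^ 2 :=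
      one_sub_sq_mul_soninQ_sq_le (legendre_ode n) hlam hy
    _ ≤ (4 / (n + 1)) ^ 2 :=
      pow_le_pow_left₀ ((sq_nonneg _).trans (sq_eval_le_soninQ hlam (by norm_num)))
        (soninQ_legendre_zero_le n) 2

theorem stmt_9 :
    ∃ K : ℝ, 0 < K ∧ ∀ j : ℕ, 1 ≤ j → ∀ y ∈ Set.Ioo (-1 : ℝ) 1,
      |(legendre j).eval y| < K / (Real.sqrt ((j : ℝ) + 1) * (1 - y ^ 2) ^ ((1 : ℝ) / 4)) := by
  refine ⟨3, by norm_num, fun j _ y hy => ?_⟩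
  have hw : 0 < 1 - y ^ 2 := by nlinarith [hy.1, hy.2]
  have hbound := one_sub_sq_mul_legendre_eval_pow_four_le j (Ioo_subset_Icc_self hy)
  set x := |(legendre j).eval y| * (Real.sqrt ((j : ℝ) + 1) * (1 - y ^ 2) ^ ((1 : ℝ) / 4))
  have hx4 : x ^ 4 = (1 - y ^ 2) * (legendre j).eval y ^ 4 * ((j : ℝ) + 1) ^ 2 := by
    have hroot : ((1 - y ^ 2) ^ ((1 : ℝ) / 4)) ^ 4 = 1 - y ^ 2 := by
      rw [one_div]
      exact_mod_cast Real.rpow_inv_natCast_pow hw.le (n := 4) (by norm_num)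
    rw [mul_pow, mul_pow, hroot, pow_abs, abs_of_nonneg (by positivity),
      show Real.sqrt ((j : ℝ) + 1) ^ 4 = (Real.sqrt ((j : ℝ) + 1) ^ 2) ^ 2 by ring,
      Real.sq_sqrt (by positivity)]
    ring
  have hx : x ≤ 2 := by
    refine (pow_le_pow_iff_left₀ (by positivity) (by norm_num) (by norm_num : 4 ≠ 0)).1 ?_
    rw [hx4]
    calc (1 - y ^ 2) * (legendre j).eval y ^ 4 * ((j : ℝ) + 1) ^ 2
        ≤ (4 / (j + 1)) ^ 2 * ((j : ℝ) + 1) ^ 2 := by gcongr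
      _ = 2 ^ 4 := by field_simp; norm_num
  rw [lt_div_iff₀ (by positivity)]
  linarith
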